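/- arXiv:2302.06084 — 2 statements merged into one kernel-verified Lean document; each statement's English description precedes it below -/
import Mathlib

section
/- Let n ≥ 1, let A be a finite-dimensional complex inner product space, let a₀ ∈ A be a unit vector, let (φ_i)_{i∈[n]} be an orthonormal family in A, and let p be a probability distribution on [n]. Let (e_i)_{i∈[n]} denote the standard orthonormal basis of ℂⁿ and fix the distinguished basis vector e₁. Suppose U_p is a unitary operator on A ⊗ ℂⁿ satisfying U_p(a₀ ⊗ e₁) = Σ_{i∈[n]} √(p_i) · (φ_i ⊗ e_i), and U_copy is a unitary operator on ℂⁿ ⊗ ℂⁿ satisfying U_copy(e_i ⊗ e₁) = e_i ⊗ e_i for all i ∈ [n]. Define Ũ_p := (U_p† ⊗ I_{ℂⁿ}) ∘ (I_A ⊗ U_copy) ∘ (U_p ⊗ I_{ℂⁿ}) on A ⊗ ℂⁿ ⊗ ℂⁿ. Then for every k ∈ [n], the inner product ⟨a₀ ⊗ e₁ ⊗ e_k, Ũ_p(a₀ ⊗ e₁ ⊗ e₁)⟩ equals p_k. -/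
open scoped ComplexInnerProductSpace

/-- The tensor product of two vectors of Euclidean spaces, realized concretely:
`(tp f g) (a, b) = f a * g b`.  This realizes `EuclideanSpace ℂ (α × β)` as the
tensor product `EuclideanSpace ℂ α ⊗ EuclideanSpace ℂ β` with the induced inner
product `⟪u₁ ⊗ v₁, u₂ ⊗ v₂⟫ = ⟪u₁, u₂⟫ ⟪v₁, v₂⟫`. -/
noncomputable def tp {α β : Type*} (f : EuclideanSpace ℂ α) (g : EuclideanSpace ℂ β) :
    EuclideanSpace ℂ (α × β) := WithLp.toLp 2 (fun x => f x.1 * g x.2)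

/-- Tensor of a vector of `EuclideanSpace ℂ α` with a vector of
`EuclideanSpace ℂ (β × γ)`, placed in `EuclideanSpace ℂ ((α × β) × γ)`. -/
noncomputable def tpL {α β γ : Type*} (a : EuclideanSpace ℂ α) (z : EuclideanSpace ℂ (β × γ)) :
    EuclideanSpace ℂ ((α × β) × γ) := WithLp.toLp 2 (fun x => a x.1.1 * z (x.1.2, x.2))

/-- The standard orthonormal basis vector `e_i` of `ℂⁿ`. -/
noncomputable def eb {n : ℕ} (i : Fin n) : EuclideanSpace ℂ (Fin n) :=
  EuclideanSpace.single i 1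

/-!
`Ũ_p` sends `a₀ ⊗ e₁ ⊗ e₁` to `∑ i, √(p i) • U_p†(φ i ⊗ e i) ⊗ e i`: the copy gate entangles the
index register with a fresh one, and `U_p†` only acts on the first two factors. Pairing with
`a₀ ⊗ e₁ ⊗ e k` kills every term but `i = k`, and `⟪a₀ ⊗ e₁, U_p†(φ k ⊗ e k)⟫ =
⟪U_p(a₀ ⊗ e₁), φ k ⊗ e k⟫ = √(p k)` because the vectors `φ i ⊗ e i` are orthonormal.
-/

section TensorVectors

variable {α β γ : Type*}

lemma inner_tp_tp [Fintype α] [Fintype β] (f u : EuclideanSpace ℂ α) (g v : EuclideanSpace ℂ β) :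
    ⟪tp f g, tp u v⟫ = ⟪f, u⟫ * ⟪g, v⟫ := by
  simp only [tp, PiLp.inner_apply, RCLike.inner_apply, map_mul]
  rw [Finset.sum_mul_sum, Fintype.sum_prod_type]
  simp only [mul_mul_mul_comm]

lemma tp_sum_smul_left {κ : Type*} (s : Finset κ) (c : κ → ℂ) (f : κ → EuclideanSpace ℂ α)
    (g : EuclideanSpace ℂ β) : tp (∑ i ∈ s, c i • f i) g = ∑ i ∈ s, c i • tp (f i) g := by
  ext x
  simp [tp, Finset.sum_mul, mul_assoc]

lemma tp_tp_eq_tpL (a : EuclideanSpace ℂ α) (b : EuclideanSpace ℂ β) (c : EuclideanSpace ℂ γ) :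
    tp (tp a b) c = tpL a (tp b c) := by
  ext x
  simp [tp, tpL, mul_assoc]

lemma Orthonormal.tp [Fintype α] [Fintype β] {κ : Type*} {f : κ → EuclideanSpace ℂ α}
    {g : κ → EuclideanSpace ℂ β} (hf : Orthonormal ℂ f) (hg : Orthonormal ℂ g) :
    Orthonormal ℂ fun i => tp (f i) (g i) := by
  classical
  rw [orthonormal_iff_ite] at hf hg ⊢
  intro i j
  rw [inner_tp_tp, hf, hg]
  split_ifs <;> simp

end TensorVectors

lemma orthonormal_eb (n : ℕ) : Orthonormal ℂ (eb (n := n)) :=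
  EuclideanSpace.orthonormal_single

theorem stmt0_general {n : ℕ} {ι : Type*} [Fintype ι]
    (a₀ : EuclideanSpace ℂ ι)
    (φ : Fin n → EuclideanSpace ℂ ι) (hφ : Orthonormal ℂ φ)
    (p : Fin n → ℝ) (hp0 : ∀ i, 0 ≤ p i)
    (e₁ : EuclideanSpace ℂ (Fin n))
    (Up : EuclideanSpace ℂ (ι × Fin n) ≃ₗᵢ[ℂ] EuclideanSpace ℂ (ι × Fin n))
    (hUp : Up (tp a₀ e₁) = ∑ i, (Real.sqrt (p i) : ℂ) • tp (φ i) (eb i))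
    (Ucopy : EuclideanSpace ℂ (Fin n × Fin n) ≃ₗᵢ[ℂ] EuclideanSpace ℂ (Fin n × Fin n))
    (hUcopy : ∀ i : Fin n, Ucopy (tp (eb i) e₁) = tp (eb i) (eb i))
    -- `UpI = U_p ⊗ I` on `A ⊗ ℂⁿ ⊗ ℂⁿ`:
    (UpI : EuclideanSpace ℂ ((ι × Fin n) × Fin n) ≃ₗᵢ[ℂ] EuclideanSpace ℂ ((ι × Fin n) × Fin n))
    (hUpI : ∀ (z : EuclideanSpace ℂ (ι × Fin n)) (c : EuclideanSpace ℂ (Fin n)),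
      UpI (tp z c) = tp (Up z) c)
    -- `IUcopy = I ⊗ U_copy` on `A ⊗ ℂⁿ ⊗ ℂⁿ`:
    (IUcopy : EuclideanSpace ℂ ((ι × Fin n) × Fin n) ≃ₗᵢ[ℂ] EuclideanSpace ℂ ((ι × Fin n) × Fin n))
    (hIUcopy : ∀ (a : EuclideanSpace ℂ ι) (z : EuclideanSpace ℂ (Fin n × Fin n)),
      IUcopy (tpL a z) = tpL a (Ucopy z))
    -- `UpdI = U_p† ⊗ I` on `A ⊗ ℂⁿ ⊗ ℂⁿ`:
    (UpdI : EuclideanSpace ℂ ((ι × Fin n) × Fin n) ≃ₗᵢ[ℂ] EuclideanSpace ℂ ((ι × Fin n) × Fin n))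
    (hUpdI : ∀ (z : EuclideanSpace ℂ (ι × Fin n)) (c : EuclideanSpace ℂ (Fin n)),
      UpdI (tp z c) = tp (Up.symm z) c) :
    ∀ k : Fin n,
      ⟪tp (tp a₀ e₁) (eb k), UpdI (IUcopy (UpI (tp (tp a₀ e₁) e₁)))⟫ = (p k : ℂ) := by
  intro k
  set c : Fin n → ℂ := fun i => (Real.sqrt (p i) : ℂ)
  have hŨ : UpdI (IUcopy (UpI (tp (tp a₀ e₁) e₁))) =
      ∑ i, c i • tp (Up.symm (tp (φ i) (eb i))) (eb i) :=
    calc UpdI (IUcopy (UpI (tp (tp a₀ e₁) e₁)))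
        = UpdI (IUcopy (∑ i, c i • tp (tp (φ i) (eb i)) e₁)) := by
          rw [hUpI, hUp, tp_sum_smul_left]
      _ = UpdI (∑ i, c i • tp (tp (φ i) (eb i)) (eb i)) := by
          simp only [map_sum, map_smul, tp_tp_eq_tpL, hIUcopy, hUcopy]
      _ = ∑ i, c i • tp (Up.symm (tp (φ i) (eb i))) (eb i) := by
          simp only [map_sum, map_smul, hUpdI]
  have hcoeff (i : Fin n) : ⟪tp a₀ e₁, Up.symm (tp (φ i) (eb i))⟫ = c i := by
    rw [← Up.inner_map_eq_flip, hUp, (hφ.tp (orthonormal_eb n)).inner_left_fintype]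
    exact Complex.conj_ofReal _
  rw [hŨ, inner_sum]
  simp only [inner_smul_right, inner_tp_tp, hcoeff, orthonormal_iff_ite.mp (orthonormal_eb n),
    mul_ite, mul_one, mul_zero, Finset.sum_ite_eq, Finset.mem_univ, if_true]
  rw [← Complex.ofReal_mul, Real.mul_self_sqrt (hp0 k)]

/-- Let `n ≥ 1`, let `A` be a finite-dimensional complex inner product
space (realized as `EuclideanSpace ℂ ι`), `a₀ ∈ A` a unit vector, `(φ i)` an orthonormal
family in `A`, and `p` a probability distribution on `[n]`.  Let `U_p` be a unitary on
`A ⊗ ℂⁿ` with `U_p (a₀ ⊗ e₁) = ∑ i, √(p i) • (φ i ⊗ e i)`, and `U_copy` a unitary on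
`ℂⁿ ⊗ ℂⁿ` with `U_copy (e i ⊗ e₁) = e i ⊗ e i`.  Let `UpI = U_p ⊗ I`, `IUcopy = I ⊗ U_copy`
and `UpdI = U_p† ⊗ I` (the adjoint of a unitary being its inverse `Up.symm`), so that
`Ũ_p = UpdI ∘ IUcopy ∘ UpI`.  Then for every `k`,
`⟪a₀ ⊗ e₁ ⊗ e_k, Ũ_p (a₀ ⊗ e₁ ⊗ e₁)⟫ = p k`. -/
theorem stmt0 {n : ℕ} (hn : 1 ≤ n) {ι : Type*} [Fintype ι] [DecidableEq ι]
    (a₀ : EuclideanSpace ℂ ι) (ha₀ : ‖a₀‖ = 1)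
    (φ : Fin n → EuclideanSpace ℂ ι) (hφ : Orthonormal ℂ φ)
    (p : Fin n → ℝ) (hp0 : ∀ i, 0 ≤ p i) (hp1 : ∑ i, p i = 1)
    (e₁ : EuclideanSpace ℂ (Fin n)) (he₁ : e₁ = eb ⟨0, hn⟩)
    (Up : EuclideanSpace ℂ (ι × Fin n) ≃ₗᵢ[ℂ] EuclideanSpace ℂ (ι × Fin n))
    (hUp : Up (tp a₀ e₁) = ∑ i, (Real.sqrt (p i) : ℂ) • tp (φ i) (eb i))
    (Ucopy : EuclideanSpace ℂ (Fin n × Fin n) ≃ₗᵢ[ℂ] EuclideanSpace ℂ (Fin n × Fin n))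
    (hUcopy : ∀ i : Fin n, Ucopy (tp (eb i) e₁) = tp (eb i) (eb i))
    -- `UpI = U_p ⊗ I` on `A ⊗ ℂⁿ ⊗ ℂⁿ`:
    (UpI : EuclideanSpace ℂ ((ι × Fin n) × Fin n) ≃ₗᵢ[ℂ] EuclideanSpace ℂ ((ι × Fin n) × Fin n))
    (hUpI : ∀ (z : EuclideanSpace ℂ (ι × Fin n)) (c : EuclideanSpace ℂ (Fin n)),
      UpI (tp z c) = tp (Up z) c)
    -- `IUcopy = I ⊗ U_copy` on `A ⊗ ℂⁿ ⊗ ℂⁿ`: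
    (IUcopy : EuclideanSpace ℂ ((ι × Fin n) × Fin n) ≃ₗᵢ[ℂ] EuclideanSpace ℂ ((ι × Fin n) × Fin n))
    (hIUcopy : ∀ (a : EuclideanSpace ℂ ι) (z : EuclideanSpace ℂ (Fin n × Fin n)),
      IUcopy (tpL a z) = tpL a (Ucopy z))
    -- `UpdI = U_p† ⊗ I` on `A ⊗ ℂⁿ ⊗ ℂⁿ`:
    (UpdI : EuclideanSpace ℂ ((ι × Fin n) × Fin n) ≃ₗᵢ[ℂ] EuclideanSpace ℂ ((ι × Fin n) × Fin n))
    (hUpdI : ∀ (z : EuclideanSpace ℂ (ι × Fin n)) (c : EuclideanSpace ℂ (Fin n)),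
      UpdI (tp z c) = tp (Up.symm z) c) :
    ∀ k : Fin n,
      ⟪tp (tp a₀ e₁) (eb k), UpdI (IUcopy (UpI (tp (tp a₀ e₁) e₁)))⟫ = (p k : ℂ) :=
  stmt0_general a₀ φ hφ p hp0 e₁ Up hUp Ucopy hUcopy UpI hUpI IUcopy hIUcopy UpdI hUpdI
end

section
/- Let ν ∈ (0, 1], ε ∈ (0, 1), let p and q be probability distributions on [n], set Δ := ‖p − q‖₂²/4, let t ≥ 20π/(νε) be a real number, and let Δ' be any real number satisfying |Δ' − Δ| ≤ 2π√Δ/t + π²/t². Then: (i) if ‖p − q‖₂ ≤ (1 − ν)ε, then Δ' < (1/4 − ν/8)·ε²; and (ii) if ‖p − q‖₂ ≥ ε, then Δ' ≥ (1/4 − ν/8)·ε². In particular, the decision rule 'output CLOSE if Δ' < (1/4 − ν/8)ε², else output FAR' correctly distinguishes the two promised cases. -/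
open Real

/-!
With `D := ‖p − q‖₂` we have `√Δ = D / 2`, and `t ≥ 20π/(νε)` gives `δ := π / t ≤ νε/20`, so
`|Δ' − D²/4| ≤ δ D + δ²`. If `D ≤ (1 − ν)ε`, the upper end `D²/4 + δD + δ²` is below the threshold
`(1/4 − ν/8)ε²` by a margin of order `ν ε²`. If `D ≥ ε ≥ 2δ`, the lower end `D²/4 − δD − δ²` is
increasing in `D` and already at `D = ε` exceeds the threshold.
-/

lemma sqrt_sq_div_four {D : ℝ} (hD : 0 ≤ D) : √(D ^ 2 / 4) = D / 2 := by
  rw [show D ^ 2 / 4 = (D / 2) ^ 2 by ring, sqrt_sq (by linarith)]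

lemma div_le_div_of_mul_div_le {a b c t : ℝ} (ha : 0 < a) (hb : 0 < b) (hc : 0 < c)
    (ht : c * a / b ≤ t) : a / t ≤ b / c := by
  have ht0 : 0 < t := lt_of_lt_of_le (by positivity) ht
  rw [div_le_iff₀ hb] at ht
  rw [div_le_div_iff₀ ht0 hc]
  linarith

lemma add_add_sq_lt_threshold {ν ε D δ : ℝ} (hν0 : 0 < ν) (hν1 : ν ≤ 1) (hε : 0 < ε)
    (hD0 : 0 ≤ D) (hD : D ≤ (1 - ν) * ε) (hδ0 : 0 ≤ δ) (hδ : δ ≤ ν * ε / 20) :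
    D ^ 2 / 4 + δ * D + δ ^ 2 < (1 / 4 - ν / 8) * ε ^ 2 := by
  have hsq : D ^ 2 ≤ ((1 - ν) * ε) ^ 2 := pow_le_pow_left₀ hD0 hD 2
  have hlin : δ * D ≤ ν * ε / 20 * ((1 - ν) * ε) := mul_le_mul hδ hD hD0 (by positivity)
  have hδsq : δ ^ 2 ≤ (ν * ε / 20) ^ 2 := pow_le_pow_left₀ hδ0 hδ 2
  have hmargin : 0 < ν * ε ^ 2 * (13 / 40 - 81 / 400 * ν) := by
    have : 0 < 13 / 40 - 81 / 400 * ν := by linarith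
    positivity
  nlinarith

lemma threshold_le_sub_sub_sq {ν ε D δ : ℝ} (hν0 : 0 ≤ ν) (hν1 : ν ≤ 1) (hε : 0 ≤ ε)
    (hD : ε ≤ D) (hδ0 : 0 ≤ δ) (hδ : δ ≤ ν * ε / 20) :
    (1 / 4 - ν / 8) * ε ^ 2 ≤ D ^ 2 / 4 - δ * D - δ ^ 2 := by
  have hmono : ε ^ 2 / 4 - δ * ε ≤ D ^ 2 / 4 - δ * D := by
    have h2δ : 2 * δ ≤ ε := by nlinarith
    nlinarith [mul_nonneg (sub_nonneg.2 hD) (sub_nonneg.2 hD)]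
  have hlin : δ * ε ≤ ν * ε / 20 * ε := mul_le_mul_of_nonneg_right hδ hε
  have hδsq : δ ^ 2 ≤ (ν * ε / 20) ^ 2 := pow_le_pow_left₀ hδ0 hδ 2
  have hmargin : 0 ≤ ν * ε ^ 2 * (3 / 40 - ν / 400) := by
    have : 0 ≤ 3 / 40 - ν / 400 := by linarith
    positivity
  nlinarith

theorem stmt12_general {n : ℕ} (ν ε t Δ' : ℝ) (hν0 : 0 < ν) (hν1 : ν ≤ 1) (hε0 : 0 < ε)
    (p q : Fin n → ℝ)
    (ht : 20 * π / (ν * ε) ≤ t)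
    (hΔ' : |Δ' - Real.sqrt (∑ i, (p i - q i) ^ 2) ^ 2 / 4| ≤
      2 * π * Real.sqrt (Real.sqrt (∑ i, (p i - q i) ^ 2) ^ 2 / 4) / t + π ^ 2 / t ^ 2) :
    (Real.sqrt (∑ i, (p i - q i) ^ 2) ≤ (1 - ν) * ε → Δ' < (1 / 4 - ν / 8) * ε ^ 2) ∧
    (ε ≤ Real.sqrt (∑ i, (p i - q i) ^ 2) → (1 / 4 - ν / 8) * ε ^ 2 ≤ Δ') := by
  set D := √(∑ i, (p i - q i) ^ 2)
  have hD0 : 0 ≤ D := sqrt_nonneg _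
  have hδ : π / t ≤ ν * ε / 20 :=
    div_le_div_of_mul_div_le pi_pos (mul_pos hν0 hε0) (by norm_num) ht
  have hδ0 : 0 ≤ π / t := by
    have : 0 < t := lt_of_lt_of_le (by positivity) ht
    positivity
  have herr : |Δ' - D ^ 2 / 4| ≤ π / t * D + (π / t) ^ 2 := by
    convert hΔ' using 1
    rw [sqrt_sq_div_four hD0]
    ring
  obtain ⟨hlo, hhi⟩ := abs_le.mp herr
  refine ⟨fun hclose => ?_, fun hfar => ?_⟩
  · linarith [add_add_sq_lt_threshold hν0 hν1 hε0 hD0 hclose hδ0 hδ]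
  · linarith [threshold_le_sub_sub_sq hν0.le hν1 hε0.le hfar hδ0 hδ]

/-- Deterministic core of the correctness of the quantum `ℓ²`-closeness
tester.  Let `ν ∈ (0, 1]`, `ε ∈ (0, 1)`, let `p`, `q` be probability distributions on `[n]`,
set `Δ := ‖p − q‖₂²/4` with `‖p − q‖₂ := (∑ i, (p i − q i)²)^{1/2}`, let `t ≥ 20π/(νε)`,
and let `Δ'` satisfy `|Δ' − Δ| ≤ 2π√Δ/t + π²/t²`.  Then:
(i) if `‖p − q‖₂ ≤ (1 − ν)ε` then `Δ' < (1/4 − ν/8)ε²`; and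
(ii) if `‖p − q‖₂ ≥ ε` then `Δ' ≥ (1/4 − ν/8)ε²`.
Hence the rule "output CLOSE iff `Δ' < (1/4 − ν/8)ε²`" distinguishes the two promised cases. -/
theorem stmt12 {n : ℕ} (ν ε t Δ' : ℝ) (hν0 : 0 < ν) (hν1 : ν ≤ 1) (hε0 : 0 < ε) (hε1 : ε < 1)
    (p q : Fin n → ℝ) (hp0 : ∀ i, 0 ≤ p i) (hp1 : ∑ i, p i = 1)
    (hq0 : ∀ i, 0 ≤ q i) (hq1 : ∑ i, q i = 1)
    (ht : 20 * π / (ν * ε) ≤ t)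
    (hΔ' : |Δ' - Real.sqrt (∑ i, (p i - q i) ^ 2) ^ 2 / 4| ≤
      2 * π * Real.sqrt (Real.sqrt (∑ i, (p i - q i) ^ 2) ^ 2 / 4) / t + π ^ 2 / t ^ 2) :
    (Real.sqrt (∑ i, (p i - q i) ^ 2) ≤ (1 - ν) * ε → Δ' < (1 / 4 - ν / 8) * ε ^ 2) ∧
    (ε ≤ Real.sqrt (∑ i, (p i - q i) ^ 2) → (1 / 4 - ν / 8) * ε ^ 2 ≤ Δ') :=
  stmt12_general ν ε t Δ' hν0 hν1 hε0 p q ht hΔ'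
end
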